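/- arXiv:2106.13160 — 3 statements merged into one kernel-verified Lean document; each statement's English description precedes it below -/
import Mathlib

section
/- For every real number σ > 2 there exists a constant c(σ) > e^3 such that for all real numbers x, y with c(σ) ≤ y ≤ x, one has ln^σ(x+y) - ln^σ(x) - (1/2)·ln^σ(y) ≤ 0, where ln^σ(t) denotes (ln t)^σ. -/
/-!
Put `s = ln y ≤ t = ln x`, so that `y / x = e^(s - t)` and `ln (x + y) ≤ t + e^(s - t)`.
By convexity of `u ↦ u^σ` the increment `(t + e^(s - t))^σ - t^σ` is at most
`σ (t + 1)^(σ - 1) e^(s - t)`. Since `u ↦ u^(σ - 1) e^(-u)` decreases for `u ≥ σ - 1`,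
this is at most `σ (s + 1)^(σ - 1) ≤ e σ s^(σ - 1)`, which is `≤ s^σ / 2` once `s ≥ 2 e σ`.
-/

open Real

namespace Real

lemma rpow_sub_rpow_le_mul_rpow_sub_one {p a b : ℝ} (hp : 1 ≤ p) (hb : 0 ≤ b) (hba : b ≤ a) :
    a ^ p - b ^ p ≤ p * a ^ (p - 1) * (a - b) := by
  rcases hba.eq_or_lt with rfl | hba
  · simp
  have ha : 0 < a := hb.trans_lt hba
  have hbernoulli : 1 + p * ((b - a) / a) ≤ (b / a) ^ p := by
    have h := one_add_mul_self_le_rpow_one_add (s := (b - a) / a)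
      (by rw [le_div_iff₀ ha]; linarith) hp
    rwa [show 1 + (b - a) / a = b / a by field_simp; ring] at h
  have hap : a ^ p = a ^ (p - 1) * a := by
    rw [← rpow_add_one ha.ne', sub_add_cancel]
  rw [div_rpow hb ha.le, le_div_iff₀ (rpow_pos_of_pos ha p)] at hbernoulli
  have : (1 + p * ((b - a) / a)) * a ^ p = a ^ p - p * a ^ (p - 1) * (a - b) := by
    rw [hap]; field_simp; ring
  linarith

lemma rpow_le_rpow_mul_exp_sub {p a b : ℝ} (ha : 0 < a) (hab : a ≤ b) (hp : 0 ≤ p)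
    (hpa : p ≤ a) : b ^ p ≤ a ^ p * exp (b - a) :=
  calc b ^ p = a ^ p * (b / a) ^ p := by
        rw [← mul_rpow ha.le (div_nonneg (ha.le.trans hab) ha.le), mul_div_cancel₀ _ ha.ne']
    _ ≤ a ^ p * exp ((b - a) / a) ^ p := by
        gcongr
        · exact div_nonneg (ha.le.trans hab) ha.le
        · have := add_one_le_exp ((b - a) / a)
          rwa [show (b - a) / a + 1 = b / a by field_simp; ring] at this
    _ ≤ a ^ p * exp (b - a) := by
        rw [← exp_mul]
        gcongr
        rw [div_mul_eq_mul_div, div_le_iff₀ ha]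
        nlinarith

lemma log_add_le_log_add_div {x y : ℝ} (hx : 0 < x) (hy : 0 ≤ y) :
    log (x + y) ≤ log x + y / x := by
  have h := log_le_sub_one_of_pos (x := (x + y) / x) (by positivity)
  rw [log_div (by positivity) hx.ne', add_div, div_self hx.ne'] at h
  linarith

end Real

lemma rpow_add_exp_sub_sub_rpow_le {σ s t : ℝ} (hσ : 1 ≤ σ) (hs : 2 * exp 1 * σ ≤ s)
    (hst : s ≤ t) : (t + exp (s - t)) ^ σ - t ^ σ ≤ s ^ σ / 2 := by
  have he : 1 ≤ exp 1 := by linarith [add_one_le_exp (1 : ℝ)]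
  have hσs : σ ≤ s := by nlinarith
  have hs0 : 0 < s := by linarith
  have hδ : exp (s - t) ≤ 1 := exp_le_one_iff.mpr (by linarith)
  calc (t + exp (s - t)) ^ σ - t ^ σ
      ≤ σ * (t + exp (s - t)) ^ (σ - 1) * exp (s - t) := by
        simpa using rpow_sub_rpow_le_mul_rpow_sub_one (a := t + exp (s - t)) (b := t) hσ
          (by linarith) (by linarith [exp_pos (s - t)])
    _ ≤ σ * (t + 1) ^ (σ - 1) * exp (s - t) := by
        gcongr
        linarith [exp_pos (s - t)]
    _ ≤ σ * ((s + 1) ^ (σ - 1) * exp (t + 1 - (s + 1))) * exp (s - t) := by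
        gcongr
        exact rpow_le_rpow_mul_exp_sub (by linarith) (by linarith) (by linarith) (by linarith)
    _ = σ * (s + 1) ^ (σ - 1) := by
        rw [mul_assoc, mul_assoc, ← exp_add, show t + 1 - (s + 1) + (s - t) = 0 by ring, exp_zero,
          mul_one]
    _ ≤ σ * (s ^ (σ - 1) * exp (s + 1 - s)) := by
        gcongr
        exact rpow_le_rpow_mul_exp_sub hs0 (by linarith) (by linarith) (by linarith)
    _ ≤ s ^ σ / 2 := by
        rw [add_sub_cancel_left, ← sub_add_cancel σ 1, rpow_add_one hs0.ne', add_sub_cancel_right]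
        have : 0 < s ^ (σ - 1) := rpow_pos_of_pos hs0 _
        nlinarith

/-- For every σ > 2 there is a constant c(σ) > e³ such that for all
c(σ) ≤ y ≤ x, one has ln^σ(x+y) - ln^σ(x) - (1/2)·ln^σ(y) ≤ 0. -/
theorem stmt0 (σ : ℝ) (hσ : 2 < σ) :
    ∃ c : ℝ, Real.exp 3 < c ∧
      ∀ x y : ℝ, c ≤ y → y ≤ x →
        Real.log (x + y) ^ σ - Real.log x ^ σ - (1 / 2) * Real.log y ^ σ ≤ 0 := by
  have he : 2 ≤ exp 1 := by linarith [add_one_le_exp (1 : ℝ)]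
  refine ⟨exp (2 * exp 1 * σ), exp_lt_exp.mpr (by nlinarith), fun x y hcy hyx => ?_⟩
  have hy : 0 < y := (exp_pos _).trans_le hcy
  have hx : 0 < x := hy.trans_le hyx
  have hs : 2 * exp 1 * σ ≤ log y := (le_log_iff_exp_le hy).mpr hcy
  have hratio : y / x = exp (log y - log x) := by rw [exp_sub, exp_log hy, exp_log hx]
  have hlog : log (x + y) ^ σ ≤ (log x + exp (log y - log x)) ^ σ := by
    rw [← hratio]
    gcongr
    · exact log_nonneg (by linarith [one_le_exp (by positivity : 0 ≤ 2 * exp 1 * σ)])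
    · exact log_add_le_log_add_div hx hy.le
  have := rpow_add_exp_sub_sub_rpow_le (by linarith) hs (log_le_log hy hyx)
  linarith
end

section
/- For σ > 2 and δ ∈ (0,1), the sum over positive integers j of e^{-δ (ln j)^σ} is at most (6/δ)·exp((2/δ)^{1/(σ-1)}). -/
/-!
Put `A = (2/δ)^(1/(σ-1))`, so that `δ A^(σ-1) = 2`. Once `log j ≥ A`, the term is at most
`exp (-δ A^(σ-1) log j) = 1/j²`; the at most `e^A` remaining terms are at most `1` each.
Hence the sum is at most `e^A + π²/6 ≤ 3 e^A ≤ (6/δ) e^A`.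
-/

open Real

lemma exp_neg_mul_log_rpow_le_one_div_pow {δ σ A x : ℝ} {p : ℕ} (hδ : 0 ≤ δ)
    (hσ : 1 ≤ σ) (hA : 0 ≤ A) (hp : p ≤ δ * A ^ (σ - 1)) (hx : exp A ≤ x) :
    exp (-δ * log x ^ σ) ≤ 1 / x ^ p := by
  have hx0 : 0 < x := (exp_pos A).trans_le hx
  have hAx : A ≤ log x := (le_log_iff_exp_le hx0).mpr hx
  have hlog : 0 ≤ log x := hA.trans hAx
  have hexp : p * log x ≤ δ * log x ^ σ := calc
    p * log x ≤ δ * A ^ (σ - 1) * log x := by gcongr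
    _ ≤ δ * log x ^ (σ - 1) * log x := by gcongr
    _ = δ * log x ^ σ := by
      rw [mul_assoc, ← rpow_add_one' hlog (by linarith), sub_add_cancel]
  calc exp (-δ * log x ^ σ) ≤ exp (-(p * log x)) := exp_le_exp.mpr (by linarith)
    _ = 1 / x ^ p := by rw [exp_neg, exp_nat_mul, exp_log hx0, one_div]

lemma summable_and_tsum_le_of_le_one_of_le_one_div_sq {f : ℕ → ℝ} (N : ℕ)
    (hf0 : ∀ n, 0 ≤ f n) (hf1 : ∀ n, f n ≤ 1)
    (hfN : ∀ n, N < n → f n ≤ 1 / (n : ℝ) ^ 2) :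
    Summable f ∧ ∑' n, f n ≤ N + 1 + π ^ 2 / 6 := by
  set g : ℕ → ℝ := fun n => (if n ∈ Finset.range (N + 1) then 1 else 0) + 1 / (n : ℝ) ^ 2
  have hfg : ∀ n, f n ≤ g n := by
    intro n
    by_cases hn : n ≤ N
    · have : 0 ≤ 1 / (n : ℝ) ^ 2 := by positivity
      simp only [g, Finset.mem_range, Nat.lt_succ_iff.mpr hn, if_true]
      linarith [hf1 n]
    · simpa [g, hn] using hfN n (not_le.mp hn)
  have hg : HasSum g (N + 1 + π ^ 2 / 6) := by
    refine HasSum.add ?_ hasSum_zeta_two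
    have h := hasSum_sum_of_ne_finset_zero (L := .unconditional ℕ) (s := Finset.range (N + 1))
      (f := fun n => if n ∈ Finset.range (N + 1) then (1 : ℝ) else 0) fun n hn => if_neg hn
    rwa [Finset.sum_ite_mem, Finset.inter_self, Finset.sum_const, Finset.card_range, nsmul_one,
      Nat.cast_succ] at h
  have hf : Summable f := .of_nonneg_of_le hf0 hfg hg.summable
  exact ⟨hf, hasSum_le hfg hf.hasSum hg⟩

/-- For σ > 2 and δ ∈ (0,1), the series ∑_{j ≥ 1} e^{-δ (ln j)^σ} converges and
is at most (6/δ)·exp((2/δ)^{1/(σ-1)}). -/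
theorem stmt4 (σ δ : ℝ) (hσ : 2 < σ) (hδ0 : 0 < δ) (hδ1 : δ < 1) :
    Summable (fun j : ℕ+ => Real.exp (-δ * Real.log (j : ℝ) ^ σ)) ∧
      (∑' j : ℕ+, Real.exp (-δ * Real.log (j : ℝ) ^ σ)) ≤
        (6 / δ) * Real.exp ((2 / δ) ^ (1 / (σ - 1))) := by
  set A := (2 / δ) ^ (1 / (σ - 1))
  have hA : 0 ≤ A := by positivity
  have hδA : δ * A ^ (σ - 1) = 2 := by
    rw [← rpow_mul (by positivity), one_div_mul_cancel (by linarith), rpow_one]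
    field_simp
  set f : ℕ → ℝ := fun n => exp (-δ * log n ^ σ)
  have hf_le_one (n : ℕ) : f n ≤ 1 :=
    exp_le_one_iff.mpr <| by nlinarith [rpow_nonneg (log_natCast_nonneg n) σ]
  obtain ⟨hf, hf_tsum⟩ := summable_and_tsum_le_of_le_one_of_le_one_div_sq ⌊exp A⌋₊
    (fun n => (exp_pos _).le) hf_le_one fun n hn =>
      exp_neg_mul_log_rpow_le_one_div_pow hδ0.le (by linarith) hA (by rw [hδA]; norm_num)
        (Nat.lt_of_floor_lt hn).le
  refine ⟨summable_pnat_iff_summable_nat.mpr hf, ?_⟩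
  have hsplit : f 0 + ∑' j : ℕ+, f j = ∑' n, f n := tsum_zero_pnat_eq_tsum_nat hf
  have hf0 : f 0 = 1 := by simp [f, zero_rpow (by linarith : σ ≠ 0)]
  have hfloor : (⌊exp A⌋₊ : ℝ) ≤ exp A := Nat.floor_le (exp_pos A).le
  have hexpA : 1 ≤ exp A := one_le_exp hA
  have hδ6 : 3 ≤ 6 / δ := by rw [le_div_iff₀ hδ0]; linarith
  calc ∑' j : ℕ+, f j = ∑' n, f n - 1 := by linarith
    _ ≤ exp A + π ^ 2 / 6 := by linarith
    _ ≤ 3 * exp A := by nlinarith [pi_lt_d2, pi_pos]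
    _ ≤ 6 / δ * exp A := by gcongr
end

section
/- Let (n_i)_{1≤i≤m} be a finite sequence of integers with |n₁| ≥ |n₂| ≥ ⋯ ≥ |n_m| and satisfying the alternating sum condition n₁ − n₂ + n₃ − ⋯ + (−1)^{m+1} n_m = 0. Then ∑_{i=1}^m √|n_i| − 2√|n₁| ≥ (1/4)·∑_{i=3}^m √|n_i|. -/
open Real

/-!
The alternating sum vanishing gives the triangle inequality `|n₁| ≤ |n₂| + B` with
`B = ∑_{i ≥ 3} |n_i|`, and since every `|n_i|` with `i ≥ 3` is at most `|n₂|`, we have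
`B ≤ √|n₂| · T` with `T = ∑_{i ≥ 3} √|n_i|`. Completing the square,
`|n₂| + B ≤ (√|n₂| + T/2)²`, so `√|n₁| ≤ √|n₂| + T/2`, which even gives the bound with `1/2`
in place of `1/4`.
-/

theorem Finset.two_mul_abs_le_sum_abs_of_sum_eq_zero {ι G : Type*} [AddCommGroup G]
    [LinearOrder G] [IsOrderedAddMonoid G] {s : Finset ι} {f : ι → G} (hf : ∑ j ∈ s, f j = 0)
    {i : ι} (hi : i ∈ s) : 2 • |f i| ≤ ∑ j ∈ s, |f j| := by
  classical
  rw [← Finset.add_sum_erase s f hi, add_eq_zero_iff_eq_neg] at hf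
  calc 2 • |f i| = |f i| + |∑ j ∈ s.erase i, f j| := by rw [two_nsmul, hf, abs_neg]
    _ ≤ |f i| + ∑ j ∈ s.erase i, |f j| := add_le_add_right (abs_sum_le_sum_abs _ _) _
    _ = ∑ j ∈ s, |f j| := Finset.add_sum_erase s (fun j => |f j|) hi

theorem Finset.sum_le_sqrt_mul_sum_sqrt {ι : Type*} {s : Finset ι} {x : ι → ℝ} {a : ℝ}
    (hx₀ : ∀ i ∈ s, 0 ≤ x i) (hxa : ∀ i ∈ s, x i ≤ a) :
    ∑ i ∈ s, x i ≤ √a * ∑ i ∈ s, √(x i) := by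
  rw [Finset.mul_sum]
  refine Finset.sum_le_sum fun i hi => ?_
  calc x i = √(x i) * √(x i) := (mul_self_sqrt (hx₀ i hi)).symm
    _ ≤ √a * √(x i) := by gcongr; exact hxa i hi

theorem Real.sqrt_add_le_sqrt_add_half {a b T : ℝ} (ha : 0 ≤ a) (hT : 0 ≤ T)
    (hb : b ≤ √a * T) : √(a + b) ≤ √a + T / 2 := by
  rw [sqrt_le_left (by positivity)]
  nlinarith [sq_sqrt ha, sq_nonneg T]

theorem Fin.sum_univ_eq_add_add_sum_filter_two_le {M : Type*} [AddCommMonoid M] {m : ℕ}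
    (hm : 2 ≤ m) (f : Fin m → M) :
    ∑ i, f i = f ⟨0, by omega⟩ + f ⟨1, by omega⟩ +
      ∑ i ∈ Finset.univ.filter (fun i : Fin m => 2 ≤ (i : ℕ)), f i := by
  rw [← Finset.sum_filter_add_sum_filter_not Finset.univ (fun i : Fin m => 2 ≤ (i : ℕ)),
    add_comm]
  congr 1
  have : Finset.univ.filter (fun i : Fin m => ¬2 ≤ (i : ℕ)) = {⟨0, by omega⟩, ⟨1, by omega⟩} := by
    ext i
    simp only [Finset.mem_filter, Finset.mem_univ, true_and, Finset.mem_insert,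
      Finset.mem_singleton, Fin.ext_iff]
    omega
  rw [this, Finset.sum_pair (by simp [Fin.ext_iff])]

/-- Bourgain's inequality: if |n₁| ≥ |n₂| ≥ ⋯ ≥ |n_m| and the alternating sum
n₁ - n₂ + n₃ - ⋯ vanishes, then ∑√|n_i| - 2√|n₁| ≥ (1/4)∑_{i≥3}√|n_i|. -/
theorem stmt13 (m : ℕ) (hm : 2 ≤ m) (n : Fin m → ℤ)
    (hsorted : ∀ i j : Fin m, i ≤ j → |n j| ≤ |n i|)
    (halt : ∑ i : Fin m, (-1 : ℤ) ^ (i : ℕ) * n i = 0) :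
    (∑ i : Fin m, Real.sqrt |(n i : ℝ)|) - 2 * Real.sqrt |(n ⟨0, by omega⟩ : ℝ)| ≥
      (1 / 4) * ∑ i ∈ Finset.univ.filter (fun i : Fin m => 2 ≤ (i : ℕ)),
        Real.sqrt |(n i : ℝ)| := by
  set s := Finset.univ.filter (fun i : Fin m => 2 ≤ (i : ℕ))
  set a := |(n ⟨1, by omega⟩ : ℝ)|
  set T := ∑ i ∈ s, √|(n i : ℝ)|
  have hcancel : 2 * |n ⟨0, by omega⟩| ≤ ∑ i, |n i| := by
    simpa [abs_mul] using Finset.two_mul_abs_le_sum_abs_of_sum_eq_zero halt (Finset.mem_univ _)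
  have htriangle : |(n ⟨0, by omega⟩ : ℝ)| ≤ a + ∑ i ∈ s, |(n i : ℝ)| := by
    have : (2 * |n ⟨0, by omega⟩| : ℝ) ≤ ∑ i, |(n i : ℝ)| := by exact_mod_cast hcancel
    rw [Fin.sum_univ_eq_add_add_sum_filter_two_le hm] at this
    push_cast at this
    linarith
  have hsmall : ∑ i ∈ s, |(n i : ℝ)| ≤ √a * T :=
    Finset.sum_le_sqrt_mul_sum_sqrt (fun _ _ => abs_nonneg _) fun i hi => by
      have h1i : (⟨1, by omega⟩ : Fin m) ≤ i := by
        simp only [s, Finset.mem_filter] at hi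
        exact Fin.mk_le_of_le_val (by omega)
      have := hsorted _ _ h1i
      simp only [a]
      exact_mod_cast this
  have hT : 0 ≤ T := Finset.sum_nonneg fun _ _ => sqrt_nonneg _
  have hfirst : √|(n ⟨0, by omega⟩ : ℝ)| ≤ √a + T / 2 :=
    (sqrt_le_sqrt htriangle).trans (sqrt_add_le_sqrt_add_half (abs_nonneg _) hT hsmall)
  rw [Fin.sum_univ_eq_add_add_sum_filter_two_le hm]
  linarith
end
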